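/- Let f be an essentially bounded complex-valued measurable function on [-1,1]. Then for all s, h ∈ ℝ: if |s| ≤ 1 then |Ω_f(s+h) − Ω_f(s)| ≤ ‖f‖_∞ (2|h||s| + h²), and if |s| ≥ 1 then |Ω_f(s+h) − Ω_f(s)| ≤ ‖f‖_∞ (2|h| + 4|h| log|s| + h²). -/

import Mathlib

open MeasureTheory

/-- The kernel `v_s(t) = (1 − ist − e^{−ist})/t²` for `t ≠ 0`, `v_s(0) = s²/2`. -/
noncomputable def vker (s t : ℝ) : ℂ :=
  if t = 0 then (s : ℂ) ^ 2 / 2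
  else (1 - Complex.I * s * t - Complex.exp (-(Complex.I * s * t))) / (t : ℂ) ^ 2

/-- `Ω_f(s) = ∫_{-1}^{1} v_s(t) f(t) dt`. -/
noncomputable def Omega (f : ℝ → ℂ) (s : ℝ) : ℂ :=
  ∫ t in Set.Icc (-1 : ℝ) 1, vker s t * f t

section OmegaAux
open intervalIntegral

lemma norm_expI_sub_one_le (x : ℝ) : ‖Complex.exp (x * Complex.I) - 1‖ ≤ |x| := by
  have h1 : ‖Complex.exp (x * Complex.I) - 1‖ ^ 2 = 2 - 2 * Real.cos x := by
    rw [Complex.exp_mul_I, Complex.sq_norm, Complex.normSq_apply]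
    simp [Complex.cos_ofReal_re, Complex.sin_ofReal_re, Complex.cos_ofReal_im,
      Complex.sin_ofReal_im]
    nlinarith [Real.sin_sq_add_cos_sq x]
  have h2 : 1 - x ^ 2 / 2 ≤ Real.cos x := Real.one_sub_sq_div_two_le_cos
  have h3 : ‖Complex.exp (x * Complex.I) - 1‖ ^ 2 ≤ |x| ^ 2 := by
    rw [h1, sq_abs]; nlinarith
  exact (pow_le_pow_iff_left₀ (norm_nonneg _) (abs_nonneg _) two_ne_zero).mp h3

lemma norm_expI_sub_one_le_two (x : ℝ) : ‖Complex.exp (x * Complex.I) - 1‖ ≤ 2 := by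
  calc ‖Complex.exp (x * Complex.I) - 1‖ ≤ ‖Complex.exp (x * Complex.I)‖ + ‖(1:ℂ)‖ :=
        norm_sub_le _ _
    _ ≤ 2 := by rw [Complex.norm_exp_ofReal_mul_I]; norm_num

lemma norm_expI_sub_one_sub_le (x : ℝ) :
    ‖Complex.exp (x * Complex.I) - 1 - x * Complex.I‖ ≤ x ^ 2 / 2 := by
  -- wlog x ≥ 0 via conjugation
  suffices H : ∀ y : ℝ, 0 ≤ y → ‖Complex.exp (y * Complex.I) - 1 - y * Complex.I‖ ≤ y ^ 2 / 2 by
    rcases le_or_gt 0 x with hx | hx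
    · exact H x hx
    · have := H (-x) (by linarith)
      have hconj : (starRingEnd ℂ) (Complex.exp ((-x : ℝ) * Complex.I) - 1 - (-x : ℝ) * Complex.I)
          = Complex.exp (x * Complex.I) - 1 - x * Complex.I := by
        simp [← Complex.exp_conj, map_sub, Complex.conj_I]
        ring_nf
      calc ‖Complex.exp (x * Complex.I) - 1 - x * Complex.I‖
          = ‖Complex.exp ((-x:ℝ) * Complex.I) - 1 - (-x:ℝ) * Complex.I‖ := by
            rw [← hconj, RCLike.norm_conj]
        _ ≤ (-x) ^ 2 / 2 := this
        _ = x ^ 2 / 2 := by ring_nf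
  intro y hy
  set F : ℝ → ℂ := fun t => Complex.exp (t * Complex.I) - 1 - t * Complex.I with hF
  have hderiv : ∀ t ∈ Set.uIcc 0 y,
      HasDerivAt F (Complex.I * (Complex.exp (t * Complex.I) - 1)) t := by
    intro t _
    have h0 : HasDerivAt (fun u : ℝ => (u : ℂ) * Complex.I) Complex.I t := by
      simpa using (Complex.ofRealCLM.hasDerivAt (x := t)).mul_const Complex.I
    have h1 : HasDerivAt (fun u : ℝ => Complex.exp ((u:ℂ) * Complex.I))
        (Complex.exp ((t:ℂ) * Complex.I) * Complex.I) t := h0.cexp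
    have h2 : HasDerivAt F (Complex.exp ((t:ℂ) * Complex.I) * Complex.I - Complex.I) t :=
      (h1.sub_const 1).sub h0
    convert h2 using 1
    ring
  have hcont : ContinuousOn (fun t : ℝ => Complex.I * (Complex.exp (t * Complex.I) - 1))
      (Set.uIcc 0 y) := by
    fun_prop
  have hint : IntervalIntegrable (fun t : ℝ => Complex.I * (Complex.exp (t * Complex.I) - 1))
      volume 0 y := hcont.intervalIntegrable
  have hFTC := intervalIntegral.integral_eq_sub_of_hasDerivAt hderiv hint
  have hF0 : F 0 = 0 := by simp [hF]
  have key : F y = ∫ t in (0:ℝ)..y, Complex.I * (Complex.exp (t * Complex.I) - 1) := by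
    rw [hFTC, hF0, sub_zero]
  rw [show ‖F y‖ = ‖F y‖ from rfl] at *
  calc ‖F y‖ = ‖∫ t in (0:ℝ)..y, Complex.I * (Complex.exp (t * Complex.I) - 1)‖ := by rw [key]
    _ ≤ ∫ t in (0:ℝ)..y, |t| := by
        have hb : IntervalIntegrable (fun t : ℝ => |t|) volume 0 y :=
          (continuous_abs.continuousOn).intervalIntegrable
        refine (intervalIntegral.norm_integral_le_abs_of_norm_le ?_ hb).trans_eq ?_
        · filter_upwards with t
          rw [norm_mul, Complex.norm_I, one_mul]
          exact norm_expI_sub_one_le t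
        · rw [abs_of_nonneg]
          apply intervalIntegral.integral_nonneg hy
          intro u _; exact abs_nonneg u
    _ = y ^ 2 / 2 := by
        have : ∀ t ∈ Set.uIcc (0:ℝ) y, |t| = t := fun t ht => by
          rcases Set.mem_uIcc.mp ht with h | h
          · exact abs_of_nonneg h.1
          · exact abs_of_nonneg (hy.trans h.1)
        rw [intervalIntegral.integral_congr this, integral_id]
        ring

lemma exp_neg_Ist (s t : ℝ) :
    Complex.exp (-(Complex.I * s * t)) = Complex.exp ((-(s*t) : ℝ) * Complex.I) := by
  push_cast; ring_nf

lemma norm_exp_neg_Ist (s t : ℝ) : ‖Complex.exp (-(Complex.I * s * t))‖ = 1 := by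
  rw [exp_neg_Ist, Complex.norm_exp_ofReal_mul_I]

lemma norm_one_sub_sub_exp (s t : ℝ) :
    ‖(1 : ℂ) - Complex.I * s * t - Complex.exp (-(Complex.I * s * t))‖ ≤ (s*t)^2/2 := by
  have := norm_expI_sub_one_sub_le (-(s*t))
  have heq : Complex.exp ((-(s*t) : ℝ) * Complex.I) - 1 - (-(s*t):ℝ) * Complex.I
      = -((1 : ℂ) - Complex.I * s * t - Complex.exp (-(Complex.I * s * t))) := by
    rw [← exp_neg_Ist]; push_cast; ring
  rw [heq, norm_neg] at this
  calc ‖(1 : ℂ) - Complex.I * s * t - Complex.exp (-(Complex.I * s * t))‖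
      ≤ (-(s*t))^2/2 := this
    _ = (s*t)^2/2 := by ring

lemma norm_vker_le (s t : ℝ) : ‖vker s t‖ ≤ s^2/2 := by
  unfold vker
  by_cases ht : t = 0
  · rw [if_pos ht]
    have h0 : ((s:ℂ)^2/2) = ((s^2/2 : ℝ) : ℂ) := by push_cast; ring
    rw [h0, Complex.norm_real, Real.norm_eq_abs, abs_of_nonneg (by positivity)]
  · rw [if_neg ht, norm_div]
    have h1 := norm_one_sub_sub_exp s t
    have h2 : ‖((t:ℂ))^2‖ = t^2 := by
      rw [← Complex.ofReal_pow, Complex.norm_real, Real.norm_eq_abs,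
        abs_of_nonneg (sq_nonneg t)]
    rw [h2, div_le_iff₀ (by positivity)]
    calc ‖(1 : ℂ) - Complex.I * s * t - Complex.exp (-(Complex.I * s * t))‖
        ≤ (s*t)^2/2 := h1
      _ = s^2/2 * t^2 := by ring

lemma vker_sub_core (s h t : ℝ) (ht : t ≠ 0) :
    ‖vker (s+h) t - vker s t‖
      ≤ |h| * ‖Complex.exp (-(Complex.I * s * t)) - 1‖ / |t| + h^2/2 := by
  unfold vker
  rw [if_neg ht, if_neg ht, div_sub_div_same]
  push_cast
  have hsplit : Complex.exp (-(Complex.I * (s+h) * t))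
      = Complex.exp (-(Complex.I * s * t)) * Complex.exp ((-(h*t) : ℝ) * Complex.I) := by
    rw [← Complex.exp_add]; push_cast; ring_nf
  set e1 := Complex.exp (-(Complex.I * s * t)) with he1
  set e2 := Complex.exp ((-(h*t) : ℝ) * Complex.I) with he2
  have hA : ‖e2 - 1 - (-(h*t):ℝ) * Complex.I‖ ≤ (h*t)^2/2 := by
    have := norm_expI_sub_one_sub_le (-(h*t))
    calc ‖e2 - 1 - (-(h*t):ℝ) * Complex.I‖ ≤ (-(h*t))^2/2 := this
      _ = (h*t)^2/2 := by ring
  have hNum : (1 - Complex.I * (s+h) * t - Complex.exp (-(Complex.I * (s+h) * t)))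
      - (1 - Complex.I * s * t - e1)
      = ((t:ℂ) * h * Complex.I) * (e1 - 1) - e1 * (e2 - 1 - (-(h*t):ℝ) * Complex.I) := by
    rw [hsplit]; push_cast; ring
  rw [hNum, norm_div]
  have ht2 : ‖((t:ℂ))^2‖ = |t| * |t| := by
    rw [← Complex.ofReal_pow, Complex.norm_real, Real.norm_eq_abs, abs_pow, sq]
  rw [ht2]
  have habs : |t| ≠ 0 := abs_ne_zero.mpr ht
  have hnum_le : ‖((t:ℂ) * h * Complex.I) * (e1 - 1) - e1 * (e2 - 1 - (-(h*t):ℝ) * Complex.I)‖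
      ≤ |t| * |h| * ‖e1 - 1‖ + (h*t)^2/2 := by
    refine (norm_sub_le _ _).trans ?_
    gcongr
    · rw [norm_mul, norm_mul, norm_mul, Complex.norm_I, mul_one, Complex.norm_real,
        Complex.norm_real]
      simp [Real.norm_eq_abs]
    · calc ‖e1 * (e2 - 1 - (-(h*t):ℝ) * Complex.I)‖
          = ‖e1‖ * ‖e2 - 1 - (-(h*t):ℝ) * Complex.I‖ := norm_mul _ _
        _ ≤ 1 * ((h*t)^2/2) := by
            refine mul_le_mul ?_ hA (norm_nonneg _) zero_le_one
            rw [he1, norm_exp_neg_Ist]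
        _ = (h*t)^2/2 := one_mul _
  rw [div_le_iff₀ (by positivity)]
  refine hnum_le.trans ?_
  have h1 : (h*t)^2/2 = h^2/2 * (|t| * |t|) := by
    have h2 : |t| * |t| = t^2 := by rw [abs_mul_abs_self, sq]
    rw [h2]; ring
  have : |h| * ‖e1 - 1‖ / |t| * (|t| * |t|) = |t| * |h| * ‖e1 - 1‖ := by
    field_simp
  rw [h1, add_mul, this]

lemma norm_e1_sub_one_le_abs (s t : ℝ) :
    ‖Complex.exp (-(Complex.I * s * t)) - 1‖ ≤ |s| * |t| := by
  rw [exp_neg_Ist]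
  calc ‖Complex.exp ((-(s*t):ℝ) * Complex.I) - 1‖ ≤ |(-(s*t))| := norm_expI_sub_one_le _
    _ = |s| * |t| := by rw [abs_neg, abs_mul]

lemma norm_e1_sub_one_le_two (s t : ℝ) :
    ‖Complex.exp (-(Complex.I * s * t)) - 1‖ ≤ 2 := by
  rw [exp_neg_Ist]; exact norm_expI_sub_one_le_two _

lemma vker_sub_zero (s h : ℝ) : ‖vker (s+h) 0 - vker s 0‖ ≤ |h| * |s| + h^2/2 := by
  unfold vker
  rw [if_pos rfl, if_pos rfl]
  have h0 : ((s+h:ℝ):ℂ)^2/2 - (s:ℂ)^2/2 = (((2*s*h + h^2)/2 : ℝ) : ℂ) := by push_cast; ring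
  rw [h0, Complex.norm_real, Real.norm_eq_abs]
  calc |(2*s*h + h^2)/2| ≤ (|2*s*h| + |h^2|)/2 := by
        rw [abs_div, abs_two]; gcongr; exact abs_add_le _ _
    _ = |s| * |h| + h^2/2 := by
        rw [abs_mul, abs_mul, abs_two, abs_pow, sq_abs]; ring
    _ = |h| * |s| + h^2/2 := by ring

lemma vker_sub_bound_one (s h t : ℝ) :
    ‖vker (s+h) t - vker s t‖ ≤ |h| * |s| + h^2/2 := by
  by_cases ht : t = 0
  · subst ht; exact vker_sub_zero s h
  · refine (vker_sub_core s h t ht).trans ?_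
    gcongr
    rw [div_le_iff₀ (abs_pos.mpr ht)]
    calc |h| * ‖Complex.exp (-(Complex.I * s * t)) - 1‖ ≤ |h| * (|s| * |t|) := by
          gcongr; exact norm_e1_sub_one_le_abs s t
      _ = |h| * |s| * |t| := by ring

noncomputable def phi (s t : ℝ) : ℝ := if |t| ≤ 1/|s| then |s| else 2/|t|

lemma phi_nonneg (s t : ℝ) : 0 ≤ phi s t := by
  unfold phi; split
  · exact abs_nonneg s
  · positivity

lemma phi_le (s t : ℝ) (hs : 1 ≤ |s|) : phi s t ≤ 2 * |s| := by
  unfold phi; split_ifs with hc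
  · nlinarith [abs_nonneg s]
  · push_neg at hc
    have hs0 : 0 < |s| := lt_of_lt_of_le one_pos hs
    have h1 : 1/|s| < |t| := hc
    have ht0 : 0 < |t| := lt_trans (by positivity) h1
    rw [div_le_iff₀ ht0]
    have : 1 ≤ |s| * |t| := by
      rw [div_lt_iff₀ hs0] at h1
      nlinarith
    nlinarith

lemma vker_sub_bound_phi (s h t : ℝ) :
    ‖vker (s+h) t - vker s t‖ ≤ |h| * phi s t + h^2/2 := by
  unfold phi
  split_ifs with hc
  · exact vker_sub_bound_one s h t
  · push_neg at hc
    have ht0 : 0 < |t| := lt_of_le_of_lt (by positivity) hc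
    have ht : t ≠ 0 := abs_pos.mp ht0
    refine (vker_sub_core s h t ht).trans ?_
    gcongr
    rw [div_le_iff₀ ht0, show |h| * (2 / |t|) * |t| = |h| * 2 * (|t| / |t|) by ring,
      div_self (ne_of_gt ht0), mul_one]
    gcongr
    exact norm_e1_sub_one_le_two s t

lemma phi_measurable (s : ℝ) : Measurable (phi s) := by
  unfold phi
  exact Measurable.ite (measurableSet_le (continuous_abs.measurable) measurable_const)
    measurable_const (measurable_const.div continuous_abs.measurable)

lemma phi_intervalIntegrable (s : ℝ) (hs : 1 ≤ |s|) (u v : ℝ) :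
    IntervalIntegrable (phi s) volume u v := by
  rw [intervalIntegrable_iff]
  apply Measure.integrableOn_of_bounded (M := 2 * |s|) measure_Ioc_lt_top.ne
    (phi_measurable s).aestronglyMeasurable
  filter_upwards with t
  rw [Real.norm_eq_abs, abs_of_nonneg (phi_nonneg s t)]
  exact phi_le s t hs

lemma integral_phi (s : ℝ) (hs : 1 ≤ |s|) :
    ∫ t in (-1:ℝ)..1, phi s t = 2 + 4 * Real.log |s| := by
  have hs0 : (0:ℝ) < |s| := lt_of_lt_of_le one_pos hs
  set a := 1/|s| with ha
  have ha0 : 0 < a := by positivity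
  have ha1 : a ≤ 1 := by rw [ha, div_le_one hs0]; exact hs
  have hii := phi_intervalIntegrable s hs
  have hsa : |s| * a = 1 := by rw [ha]; field_simp
  have hsplit : ∫ t in (-1:ℝ)..1, phi s t
      = (∫ t in (-1:ℝ)..(-a), phi s t) + (∫ t in (-a)..a, phi s t)
        + (∫ t in a..(1:ℝ), phi s t) := by
    rw [intervalIntegral.integral_add_adjacent_intervals (hii _ _) (hii _ _),
      intervalIntegral.integral_add_adjacent_intervals (hii _ _) (hii _ _)]
  have hmid : (∫ t in (-a)..a, phi s t) = 2 := by
    have hcong : ∀ t ∈ Set.uIcc (-a) a, phi s t = |s| := by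
      intro t htm
      rw [Set.uIcc_of_le (by linarith)] at htm
      have : |t| ≤ a := abs_le.mpr ⟨htm.1, htm.2⟩
      unfold phi
      rw [if_pos (ha ▸ this)]
    rw [intervalIntegral.integral_congr hcong, intervalIntegral.integral_const, smul_eq_mul]
    have : a - -a = 2 * a := by ring
    rw [this]
    nlinarith
  have hright : (∫ t in a..(1:ℝ), phi s t) = 2 * Real.log |s| := by
    have hcong : ∀ᵐ t : ℝ, t ∈ Set.Ioc a 1 → phi s t = 2 * (1/t) := by
      filter_upwards with t htm2
      have h1 : a < t := htm2.1
      have h2 : ¬ (|t| ≤ 1/|s|) := by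
        rw [← ha]
        rw [abs_of_pos (ha0.trans h1)]
        linarith
      unfold phi
      rw [if_neg h2, abs_of_pos (ha0.trans h1)]
      ring
    rw [intervalIntegral.integral_congr_ae' hcong (by
      filter_upwards with t htm
      exact absurd htm.2 (not_le.mpr (lt_of_le_of_lt ha1 htm.1)) )]
    rw [intervalIntegral.integral_const_mul, integral_one_div (by
      intro hmem
      rw [Set.uIcc_of_le ha1] at hmem
      linarith [hmem.1])]
    rw [ha, one_div_one_div]
  have hleft : (∫ t in (-1:ℝ)..(-a), phi s t) = 2 * Real.log |s| := by
    have hcong : ∀ᵐ t : ℝ, t ∈ Set.Ioc (-1:ℝ) (-a) → phi s t = -(2 * (1/t)) := by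
      have hne : ∀ᵐ t : ℝ, t ≠ -a := by
        rw [ae_iff]
        have : {t : ℝ | ¬ t ≠ -a} = {-a} := by ext t; simp
        rw [this]
        exact measure_singleton _
      filter_upwards [hne] with t htne htm
      have h1 : t < -a := lt_of_le_of_ne htm.2 htne
      have ht0 : t < 0 := by linarith
      have h2 : ¬ (|t| ≤ 1/|s|) := by
        rw [← ha, abs_of_neg ht0]
        linarith
      unfold phi
      rw [if_neg h2, abs_of_neg ht0, div_neg]
      ring
    rw [intervalIntegral.integral_congr_ae' hcong (by
      filter_upwards with t htm
      exact absurd htm.2 (not_le.mpr (by linarith [htm.1])) )]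
    rw [intervalIntegral.integral_neg, intervalIntegral.integral_const_mul,
      integral_one_div (by
        intro hmem
        rw [Set.uIcc_of_le (by linarith : (-1:ℝ) ≤ -a)] at hmem
        linarith [hmem.2])]
    have : (-a) / (-1 : ℝ) = a := by field_simp
    rw [this, ha, one_div, Real.log_inv]
    ring
  rw [hsplit, hmid, hleft, hright]
  ring

lemma vker_measurable (s : ℝ) : Measurable (vker s) := by
  unfold vker
  refine Measurable.ite ?_ measurable_const (Measurable.div (by fun_prop) (by fun_prop))
  exact measurableSet_eq

theorem Omega_increment_bound'
    (f : ℝ → ℂ) (hf : MemLp f ⊤ (volume.restrict (Set.Icc (-1 : ℝ) 1)))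
    (s h : ℝ) :
    (|s| ≤ 1 →
      ‖(∫ t in Set.Icc (-1:ℝ) 1, vker (s+h) t * f t) - ∫ t in Set.Icc (-1:ℝ) 1, vker s t * f t‖ ≤
        (eLpNorm f ⊤ (volume.restrict (Set.Icc (-1 : ℝ) 1))).toReal
          * (2 * |h| * |s| + h ^ 2)) ∧
    (1 ≤ |s| →
      ‖(∫ t in Set.Icc (-1:ℝ) 1, vker (s+h) t * f t) - ∫ t in Set.Icc (-1:ℝ) 1, vker s t * f t‖ ≤
        (eLpNorm f ⊤ (volume.restrict (Set.Icc (-1 : ℝ) 1))).toReal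
          * (2 * |h| + 4 * |h| * Real.log |s| + h ^ 2)) := by
  set μR := volume.restrict (Set.Icc (-1 : ℝ) 1) with hμR
  haveI hfin : IsFiniteMeasure μR := by
    constructor
    rw [hμR, Measure.restrict_apply_univ]
    exact measure_Icc_lt_top
  set M := (eLpNorm f ⊤ μR).toReal with hM
  have hM0 : 0 ≤ M := ENNReal.toReal_nonneg
  have hMae : ∀ᵐ t ∂μR, ‖f t‖ ≤ M := by
    filter_upwards [ae_le_eLpNormEssSup (f := f) (μ := μR)] with t ht
    have hne : eLpNormEssSup f μR ≠ ⊤ := by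
      rw [← eLpNorm_exponent_top]; exact hf.2.ne
    have h2 := ENNReal.toReal_mono hne ht
    rw [toReal_enorm] at h2
    rw [hM, eLpNorm_exponent_top]
    exact h2
  have hfint : Integrable f μR := hf.integrable le_top
  have hvint : ∀ u : ℝ, Integrable (fun t => vker u t * f t) μR := by
    intro u
    exact hfint.bdd_mul (c := u^2/2) ((vker_measurable u).aestronglyMeasurable)
      (Filter.Eventually.of_forall fun t => norm_vker_le u t)
  have hΔint : Integrable (fun t => (vker (s+h) t - vker s t) * f t) μR := by
    have : (fun t => (vker (s+h) t - vker s t) * f t)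
        = fun t => vker (s+h) t * f t - vker s t * f t := by funext t; ring
    rw [this]
    exact (hvint (s+h)).sub (hvint s)
  have hdiff : (∫ t in Set.Icc (-1:ℝ) 1, vker (s+h) t * f t)
      - (∫ t in Set.Icc (-1:ℝ) 1, vker s t * f t)
      = ∫ t, (vker (s+h) t - vker s t) * f t ∂μR := by
    rw [← integral_sub (hvint (s+h)) (hvint s)]
    congr 1
    funext t
    ring
  -- general bound machine
  have main : ∀ b : ℝ → ℝ, Integrable b μR → (∀ t, 0 ≤ b t) →
      (∀ t, ‖vker (s+h) t - vker s t‖ ≤ b t) →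
      ‖(∫ t in Set.Icc (-1:ℝ) 1, vker (s+h) t * f t)
        - ∫ t in Set.Icc (-1:ℝ) 1, vker s t * f t‖ ≤ M * ∫ t, b t ∂μR := by
    intro b hbint hbnn hbd
    rw [hdiff]
    calc ‖∫ t, (vker (s+h) t - vker s t) * f t ∂μR‖
        ≤ ∫ t, ‖(vker (s+h) t - vker s t) * f t‖ ∂μR := norm_integral_le_integral_norm _
      _ ≤ ∫ t, M * b t ∂μR := by
          refine integral_mono_ae hΔint.norm (hbint.const_mul M) ?_
          filter_upwards [hMae] with t ht
          calc ‖(vker (s+h) t - vker s t) * f t‖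
              = ‖vker (s+h) t - vker s t‖ * ‖f t‖ := norm_mul _ _
            _ ≤ b t * M := mul_le_mul (hbd t) ht (norm_nonneg _) (hbnn t)
            _ = M * b t := mul_comm _ _
      _ = M * ∫ t, b t ∂μR := MeasureTheory.integral_const_mul M b
  have hvol : (μR Set.univ).toReal = 2 := by
    rw [hμR, Measure.restrict_apply_univ, Real.volume_Icc]
    norm_num
  constructor
  · intro hs
    have h1 := main (fun _ => |h| * |s| + h^2/2) (integrable_const _)
      (fun t => by positivity) (fun t => vker_sub_bound_one s h t)
    refine h1.trans ?_
    rw [MeasureTheory.integral_const, smul_eq_mul, measureReal_def, hvol]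
    have : 2 * (|h| * |s| + h ^ 2 / 2) = 2 * |h| * |s| + h ^ 2 := by ring
    rw [this]
  · intro hs
    have hphii : Integrable (phi s) μR := by
      rw [hμR]
      apply Measure.integrableOn_of_bounded (M := 2 * |s|) measure_Icc_lt_top.ne
        (phi_measurable s).aestronglyMeasurable
      filter_upwards with t
      rw [Real.norm_eq_abs, abs_of_nonneg (phi_nonneg s t)]
      exact phi_le s t hs
    have hbint : Integrable (fun t => |h| * phi s t + h^2/2) μR :=
      (hphii.const_mul _).add (integrable_const _)
    have h1 := main (fun t => |h| * phi s t + h^2/2) hbint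
      (fun t => add_nonneg (mul_nonneg (abs_nonneg h) (phi_nonneg s t)) (by positivity)) (fun t => vker_sub_bound_phi s h t)
    refine h1.trans ?_
    have hIphi : ∫ t, phi s t ∂μR = 2 + 4 * Real.log |s| := by
      rw [hμR, ← integral_phi s hs, intervalIntegral.integral_of_le (by norm_num : (-1:ℝ) ≤ 1)]
      exact integral_Icc_eq_integral_Ioc
    rw [integral_add (hphii.const_mul _) (integrable_const _), MeasureTheory.integral_const_mul,
      MeasureTheory.integral_const, smul_eq_mul, measureReal_def, hvol, hIphi]
    have : M * (|h| * (2 + 4 * Real.log |s|) + 2 * (h ^ 2 / 2))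
        = M * (2 * |h| + 4 * |h| * Real.log |s| + h ^ 2) := by ring
    rw [this]

end OmegaAux

/-- For `f` essentially bounded and measurable on `[-1,1]` and all
`s, h ∈ ℝ`: if `|s| ≤ 1` then `|Ω_f(s+h) − Ω_f(s)| ≤ ‖f‖_∞ (2|h||s| + h²)`, and if
`|s| ≥ 1` then `|Ω_f(s+h) − Ω_f(s)| ≤ ‖f‖_∞ (2|h| + 4|h| log|s| + h²)`. -/
theorem Omega_increment_bound
    (f : ℝ → ℂ) (hf : MemLp f ⊤ (volume.restrict (Set.Icc (-1 : ℝ) 1)))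
    (s h : ℝ) :
    (|s| ≤ 1 →
      ‖Omega f (s + h) - Omega f s‖ ≤
        (eLpNorm f ⊤ (volume.restrict (Set.Icc (-1 : ℝ) 1))).toReal
          * (2 * |h| * |s| + h ^ 2)) ∧
    (1 ≤ |s| →
      ‖Omega f (s + h) - Omega f s‖ ≤
        (eLpNorm f ⊤ (volume.restrict (Set.Icc (-1 : ℝ) 1))).toReal
          * (2 * |h| + 4 * |h| * Real.log |s| + h ^ 2)) := by
  unfold Omega
  exact Omega_increment_bound' f hf s h
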